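/- arXiv:1312.2655 — 8 statements merged into one kernel-verified Lean document; each statement's English description precedes it below -/
import Mathlib

section
/- Let p be a prime, s ≥ 1, n = p^s + 1, K a field of characteristic p, X the n×n nilpotent Jordan block, and k a positive integer. Then there exists a matrix A in the group U_n(K) of upper-triangular unipotent matrices such that A(1+X)A^{-1} = (1+X)^(1+p^k). -/
/-- An upper-triangular unipotent matrix: zeros below the diagonal, ones on the diagonal. -/
def IsUnipotentUpper {R : Type*} [CommRing R] {n : ℕ} (A : Matrix (Fin n) (Fin n) R) : Prop :=
  (∀ i j : Fin n, j < i → A i j = 0) ∧ ∀ i : Fin n, A i i = 1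

lemma IsUnipotentUpper.one {R : Type*} [CommRing R] {n : ℕ} :
    IsUnipotentUpper (1 : Matrix (Fin n) (Fin n) R) :=
  ⟨fun _ j h => Matrix.one_apply_ne (ne_of_gt h), fun _ => Matrix.one_apply_eq _⟩

lemma IsUnipotentUpper.mul {R : Type*} [CommRing R] {n : ℕ}
    {M N : Matrix (Fin n) (Fin n) R} (hM : IsUnipotentUpper M) (hN : IsUnipotentUpper N) :
    IsUnipotentUpper (M * N) := by
  constructor
  · intro i j hji
    rw [Matrix.mul_apply]
    apply Finset.sum_eq_zero
    intro l _
    rcases lt_or_ge l i with h | h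
    · rw [hM.1 i l h, zero_mul]
    · rw [hN.1 l j (lt_of_lt_of_le hji h), mul_zero]
  · intro i
    rw [Matrix.mul_apply, Finset.sum_eq_single i]
    · rw [hM.2, hN.2, one_mul]
    · intro b _ hb
      rcases lt_or_ge b i with h | h
      · rw [hM.1 i b h, zero_mul]
      · rw [hN.1 b i (lt_of_le_of_ne h (Ne.symm hb)), mul_zero]
    · intro h; exact absurd (Finset.mem_univ i) h

lemma IsUnipotentUpper.pow {R : Type*} [CommRing R] {n : ℕ}
    {M : Matrix (Fin n) (Fin n) R} (hM : IsUnipotentUpper M) (e : ℕ) :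
    IsUnipotentUpper (M ^ e) := by
  induction e with
  | zero => simpa using IsUnipotentUpper.one
  | succ e ih => rw [pow_succ]; exact ih.mul hM

lemma jordan_pow {K : Type*} [Field K] {n : ℕ} (X : Matrix (Fin n) (Fin n) K)
    (hX : ∀ i j : Fin n, X i j = if (i : ℕ) + 1 = (j : ℕ) then 1 else 0) (m : ℕ) :
    ∀ i j : Fin n, (X ^ m) i j = if (i : ℕ) + m = (j : ℕ) then 1 else 0 := by
  induction m with
  | zero =>
    intro i j
    simp [Matrix.one_apply, Fin.ext_iff]
  | succ m ih =>
    intro i j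
    rw [pow_succ, Matrix.mul_apply]
    by_cases h1 : (i : ℕ) + m < n
    · rw [Finset.sum_eq_single (⟨(i : ℕ) + m, h1⟩ : Fin n)]
      · rw [ih, if_pos rfl, one_mul, hX]
        by_cases hj : (i : ℕ) + (m + 1) = (j : ℕ)
        · rw [if_pos hj, if_pos (show (i : ℕ) + m + 1 = (j : ℕ) by omega)]
        · rw [if_neg hj, if_neg (show ¬((i : ℕ) + m + 1 = (j : ℕ)) by omega)]
      · intro b _ hb
        rw [ih, if_neg (fun hh => hb (Fin.ext hh.symm)), zero_mul]
      · intro h; exact absurd (Finset.mem_univ _) h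
    · have hj := j.isLt
      rw [if_neg (by omega)]
      apply Finset.sum_eq_zero
      intro l _
      have := l.isLt
      rw [ih, if_neg (by omega), zero_mul]

/-- With `n = p^s + 1`, `X` the `n × n` nilpotent Jordan block over a field `K`
of characteristic `p`, and `k ≥ 1`, there exists `A ∈ U_n(K)` (upper-triangular unipotent,
in particular invertible) with `A (1+X) A⁻¹ = (1+X)^(1+p^k)`. -/
theorem stmt4 (p s k : ℕ) (hp : p.Prime) (hs : 1 ≤ s) (hk : 1 ≤ k)
    (K : Type*) [Field K] [CharP K p]
    (X : Matrix (Fin (p ^ s + 1)) (Fin (p ^ s + 1)) K)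
    (hX : ∀ i j : Fin (p ^ s + 1), X i j = if (i : ℕ) + 1 = (j : ℕ) then 1 else 0) :
    ∃ A : (Matrix (Fin (p ^ s + 1)) (Fin (p ^ s + 1)) K)ˣ,
      IsUnipotentUpper (A : Matrix (Fin (p ^ s + 1)) (Fin (p ^ s + 1)) K) ∧
      (A : Matrix (Fin (p ^ s + 1)) (Fin (p ^ s + 1)) K) * (1 + X) *
          ((A⁻¹ : (Matrix (Fin (p ^ s + 1)) (Fin (p ^ s + 1)) K)ˣ) :
            Matrix (Fin (p ^ s + 1)) (Fin (p ^ s + 1)) K)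
        = (1 + X) ^ (1 + p ^ k) := by
  haveI : Fact p.Prime := ⟨hp⟩
  have hXpow := jordan_pow X hX
  have ha : 2 ≤ p ^ k := by
    calc 2 ≤ p := hp.two_le
    _ = p ^ 1 := (pow_one p).symm
    _ ≤ p ^ k := Nat.pow_le_pow_right hp.pos hk
  set u : Matrix (Fin (p ^ s + 1)) (Fin (p ^ s + 1)) K :=
    1 + X ^ (p ^ k - 1) + X ^ (p ^ k) with hu_def
  -- u commutes with X
  have hXu : Commute X u := by
    rw [hu_def]
    exact ((Commute.one_right X).add_right ((Commute.refl X).pow_right _)).add_right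
      ((Commute.refl X).pow_right _)
  -- u is unipotent upper triangular
  have hu : IsUnipotentUpper u := by
    constructor
    · intro i j hji
      have hji' : (j : ℕ) < (i : ℕ) := hji
      rw [hu_def]
      simp only [Matrix.add_apply, hXpow]
      rw [Matrix.one_apply_ne (ne_of_gt hji), if_neg (by omega), if_neg (by omega)]
      ring
    · intro i
      rw [hu_def]
      simp only [Matrix.add_apply, hXpow]
      rw [Matrix.one_apply_eq, if_neg (by omega), if_neg (by omega)]
      ring
  -- the conjugating matrix
  set A : Matrix (Fin (p ^ s + 1)) (Fin (p ^ s + 1)) K :=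
    Matrix.of (fun i c => ((X * u) ^ (p ^ s - (c : ℕ))) i (Fin.last (p ^ s))) with hA
  have hAapp : ∀ i c : Fin (p ^ s + 1),
      A i c = ((X * u) ^ (p ^ s - (c : ℕ))) i (Fin.last (p ^ s)) := by
    intro i c; rw [hA]; rfl
  -- key entry formula
  have key : ∀ (e : ℕ) (i : Fin (p ^ s + 1)), ((X * u) ^ e) i (Fin.last (p ^ s)) =
      if h : (i : ℕ) + e ≤ p ^ s then
        (u ^ e) ⟨(i : ℕ) + e, by omega⟩ (Fin.last (p ^ s)) else 0 := by
    intro e i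
    rw [hXu.mul_pow, Matrix.mul_apply]
    split_ifs with h
    · rw [Finset.sum_eq_single (⟨(i : ℕ) + e, by omega⟩ : Fin (p ^ s + 1))]
      · rw [hXpow, if_pos rfl, one_mul]
      · intro b _ hb
        rw [hXpow, if_neg (fun hh => hb (Fin.ext hh.symm)), zero_mul]
      · intro h; exact absurd (Finset.mem_univ _) h
    · apply Finset.sum_eq_zero
      intro l _
      have := l.isLt
      rw [hXpow, if_neg (by omega), zero_mul]
  -- A is unipotent upper triangular
  have hAuni : IsUnipotentUpper A := by
    constructor
    · intro i j hji
      have hji' : (j : ℕ) < (i : ℕ) := hji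
      have hi := i.isLt
      rw [hAapp, key, dif_neg (by omega)]
    · intro i
      have hi := i.isLt
      rw [hAapp, key, dif_pos (by omega)]
      have hfin : (⟨(i : ℕ) + (p ^ s - (i : ℕ)), by omega⟩ : Fin (p ^ s + 1))
          = Fin.last (p ^ s) := by
        simp only [Fin.ext_iff, Fin.val_mk, Fin.val_last]; omega
      rw [hfin]
      exact (hu.pow _).2 _
  -- (X u)^(p^s+1) = 0
  have hXnil : (X * u) ^ (p ^ s + 1) = 0 := by
    rw [hXu.mul_pow]
    have hz : X ^ (p ^ s + 1) = 0 := by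
      ext i j
      have := j.isLt
      rw [hXpow, if_neg (by omega)]
      rfl
    rw [hz, zero_mul]
  -- right multiplication formula
  have hR : ∀ i c : Fin (p ^ s + 1), ((X * u) * A) i c =
      ((X * u) ^ (p ^ s - (c : ℕ) + 1)) i (Fin.last (p ^ s)) := by
    intro i c
    rw [Matrix.mul_apply]
    simp_rw [hAapp]
    rw [← Matrix.mul_apply, ← pow_succ']
  -- the intertwining relation A X = (X u) A
  have hAX : A * X = (X * u) * A := by
    ext i c
    rw [hR, Matrix.mul_apply]
    by_cases hc : (c : ℕ) = 0
    · rw [Finset.sum_eq_zero, show p ^ s - (c : ℕ) + 1 = p ^ s + 1 by omega, hXnil]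
      · rfl
      · intro l _
        rw [hX, if_neg (by omega), mul_zero]
    · have hcle : (c : ℕ) ≤ p ^ s := by have := c.isLt; omega
      rw [Finset.sum_eq_single (⟨(c : ℕ) - 1, by omega⟩ : Fin (p ^ s + 1))]
      · rw [hX, if_pos (show (c : ℕ) - 1 + 1 = (c : ℕ) by omega), mul_one, hAapp]
        have hmk : ((⟨(c : ℕ) - 1, by omega⟩ : Fin (p ^ s + 1)) : ℕ) = (c : ℕ) - 1 := rfl
        rw [hmk, show p ^ s - ((c : ℕ) - 1) = p ^ s - (c : ℕ) + 1 by omega]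
      · intro b _ hb
        rw [hX, if_neg, mul_zero]
        intro hh
        exact hb (Fin.ext (show (b : ℕ) = (c : ℕ) - 1 by omega))
      · intro h; exact absurd (Finset.mem_univ _) h
  -- (1+X)^(1+p^k) = 1 + X*u
  have hpow : (1 + X) ^ (1 + p ^ k) = 1 + X * u := by
    rw [pow_add, pow_one, add_pow_char_pow_of_commute p k (Commute.one_left X), one_pow]
    have hxa : X * X ^ (p ^ k - 1) = X ^ (p ^ k) := by
      rw [← pow_succ']
      congr 1
      omega
    have hexp : X * (1 + X ^ (p ^ k - 1) + X ^ (p ^ k))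
        = X + X ^ (p ^ k) + X * X ^ (p ^ k) := by
      rw [mul_add, mul_add, mul_one, hxa]
    rw [hu_def, hexp]
    noncomm_ring
  have hconj : A * (1 + X) = (1 + X) ^ (1 + p ^ k) * A := by
    rw [hpow, mul_add, mul_one, add_mul, one_mul, hAX]
  -- A is invertible
  have hdet : A.det = 1 := by
    rw [Matrix.det_of_upperTriangular (fun i j h => hAuni.1 i j h)]
    simp [hAuni.2]
  haveI : Invertible A := A.invertibleOfIsUnitDet (by rw [hdet]; exact isUnit_one)
  refine ⟨unitOfInvertible A, hAuni, ?_⟩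
  show A * (1 + X) * _ = _
  rw [hconj, mul_assoc]
  change _ * (A * ⅟A) = _
  rw [mul_invOf_self, mul_one]
end

section
/- Let p be an odd prime and K a field of characteristic p. The cyclic group Z/p^2 Z embeds into U_{p+1}(K), but does not embed into U_r(K) for any r ≤ p. In particular, p + 1 is the smallest n such that Z/p^2 Z embeds into U_n(K). -/
section aux
variable {R : Type*} [CommRing R] {n : ℕ}

lemma unip_one : IsUnipotentUpper (1 : Matrix (Fin n) (Fin n) R) := by
  constructor
  · intro i j h
    exact Matrix.one_apply_ne (by exact fun he => absurd he.symm (ne_of_lt h))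
  · intro i; simp

lemma unip_mul {A B : Matrix (Fin n) (Fin n) R} (hA : IsUnipotentUpper A)
    (hB : IsUnipotentUpper B) : IsUnipotentUpper (A * B) := by
  constructor
  · intro i j h
    rw [Matrix.mul_apply]
    apply Finset.sum_eq_zero
    intro l _
    rcases lt_or_ge l i with hl | hl
    · rw [hA.1 i l hl, zero_mul]
    · rw [hB.1 l j (lt_of_lt_of_le h hl), mul_zero]
  · intro i
    rw [Matrix.mul_apply]
    rw [Finset.sum_eq_single i]
    · rw [hA.2, hB.2, one_mul]
    · intro l _ hl
      rcases lt_or_ge l i with h | h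
      · rw [hA.1 i l h, zero_mul]
      · rw [hB.1 l i (lt_of_le_of_ne h (Ne.symm hl)), mul_zero]
    · intro h; exact absurd (Finset.mem_univ i) h

lemma unip_pow {A : Matrix (Fin n) (Fin n) R} (hA : IsUnipotentUpper A) (k : ℕ) :
    IsUnipotentUpper (A ^ k) := by
  induction k with
  | zero => simpa using unip_one
  | succ k ih => rw [pow_succ]; exact unip_mul ih hA

/-- strictly upper triangular matrices: powers vanish below a shifted diagonal -/
lemma strict_pow_apply {N : Matrix (Fin n) (Fin n) R}
    (h : ∀ i j : Fin n, (j : ℕ) ≤ i → N i j = 0) (k : ℕ) :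
    ∀ i j : Fin n, (j : ℕ) < i + k → (N ^ k) i j = 0 := by
  induction k with
  | zero =>
    intro i j hj
    rw [pow_zero]
    exact Matrix.one_apply_ne (by intro he; rw [he] at hj; omega)
  | succ k ih =>
    intro i j hj
    rw [pow_succ, Matrix.mul_apply]
    apply Finset.sum_eq_zero
    intro l _
    rcases lt_or_ge (l : ℕ) (i + k) with hl | hl
    · rw [ih i l hl, zero_mul]
    · rw [h l j (by omega), mul_zero]

lemma strict_pow_eq_zero {N : Matrix (Fin n) (Fin n) R}
    (h : ∀ i j : Fin n, (j : ℕ) ≤ i → N i j = 0) {k : ℕ} (hk : n ≤ k) :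
    N ^ k = 0 := by
  ext i j
  rw [Matrix.zero_apply]
  exact strict_pow_apply h k i j (by omega)

/-- the nilpotent Jordan block -/
def jord (R : Type*) [CommRing R] (n : ℕ) : Matrix (Fin n) (Fin n) R :=
  fun i j => if (i : ℕ) + 1 = j then 1 else 0

lemma jord_pow (k : ℕ) :
    ∀ i j : Fin n, (jord R n ^ k) i j = if (i : ℕ) + k = j then 1 else 0 := by
  induction k with
  | zero =>
    intro i j
    rw [pow_zero, Matrix.one_apply]
    congr 1
    simp [Fin.ext_iff, eq_comm]
  | succ k ih =>
    intro i j
    rw [pow_succ, Matrix.mul_apply]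
    rcases lt_or_ge ((i : ℕ) + k) n with hlt | hle
    · set l0 : Fin n := ⟨(i : ℕ) + k, hlt⟩ with hl0
      have hterm : ∀ l ∈ Finset.univ, (jord R n ^ k) i l * jord R n l j
          = if l = l0 then jord R n l j else 0 := by
        intro l _
        rw [ih]
        by_cases hl : l = l0
        · rw [if_pos hl, if_pos (by rw [hl]), one_mul]
        · rw [if_neg (fun hc => hl (Fin.ext hc.symm)), if_neg hl, zero_mul]
      rw [Finset.sum_congr rfl hterm,
        Finset.sum_ite_eq' Finset.univ l0 (fun l => jord R n l j),
        if_pos (Finset.mem_univ _)]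
      rfl
    · rw [Finset.sum_eq_zero (fun l _ => by
        rw [ih, if_neg (by omega), zero_mul]), if_neg (by omega)]

lemma jord_strict : ∀ i j : Fin n, (j : ℕ) ≤ i → jord R n i j = 0 := by
  intro i j h
  exact if_neg (by omega)

end aux

/-- For `p` an odd prime and `K` of characteristic `p`, the cyclic group
`ℤ/p²ℤ` embeds into `U_{p+1}(K)` but into no `U_r(K)` with `r ≤ p`; so `p + 1` is the
smallest `n` such that `ℤ/p²ℤ` embeds into `U_n(K)`. -/
theorem stmt8 (p : ℕ) (hp : p.Prime) (hodd : p ≠ 2)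
    (K : Type*) [Field K] [CharP K p] :
    (∃ φ : Multiplicative (ZMod (p ^ 2)) →* (Matrix (Fin (p + 1)) (Fin (p + 1)) K)ˣ,
        Function.Injective φ ∧
        ∀ g, IsUnipotentUpper ((φ g : (Matrix (Fin (p + 1)) (Fin (p + 1)) K)ˣ) :
          Matrix (Fin (p + 1)) (Fin (p + 1)) K)) ∧
    ∀ r ≤ p, ¬ ∃ φ : Multiplicative (ZMod (p ^ 2)) →* (Matrix (Fin r) (Fin r) K)ˣ,
        Function.Injective φ ∧
        ∀ g, IsUnipotentUpper ((φ g : (Matrix (Fin r) (Fin r) K)ˣ) :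
          Matrix (Fin r) (Fin r) K) := by
  haveI : Fact p.Prime := ⟨hp⟩
  have hp2 : 2 ≤ p := hp.two_le
  haveI : NeZero (p ^ 2) := ⟨pow_ne_zero 2 hp.ne_zero⟩
  have hp2lt : p + 1 ≤ p ^ 2 := by nlinarith
  constructor
  · -- the embedding into U_{p+1}
    set N : Matrix (Fin (p + 1)) (Fin (p + 1)) K := jord K (p + 1) with hN
    have hNstrict : ∀ i j : Fin (p + 1), (j : ℕ) ≤ i → N i j = 0 := jord_strict
    have hN1 : N ^ (p + 1) = 0 := strict_pow_eq_zero hNstrict le_rfl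
    have hNp2 : N ^ (p ^ 2) = 0 := by
      obtain ⟨m, hm⟩ := Nat.exists_eq_add_of_le hp2lt
      rw [hm, pow_add, hN1, zero_mul]
    have hNp_ne : N ^ p ≠ 0 := by
      intro h0
      have hval := jord_pow (R := K) (n := p + 1) p
        (⟨0, by omega⟩ : Fin (p + 1)) (⟨p, by omega⟩ : Fin (p + 1))
      rw [← hN, h0] at hval
      simp at hval
    set J : Matrix (Fin (p + 1)) (Fin (p + 1)) K := 1 + N with hJ
    have hcomm : Commute (1 : Matrix (Fin (p + 1)) (Fin (p + 1)) K) N := Commute.one_left N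
    have hJp2 : J ^ p ^ 2 = 1 := by
      rw [hJ, add_pow_char_pow_of_commute _ _ hcomm, one_pow, hNp2, add_zero]
    have hJp : J ^ p ≠ 1 := by
      rw [hJ, add_pow_char_of_commute _ hcomm, one_pow]
      intro h
      exact hNp_ne (by rwa [add_eq_left] at h)
    have hmul1 : J * J ^ (p ^ 2 - 1) = 1 := by
      rw [← pow_succ']
      rw [show p ^ 2 - 1 + 1 = p ^ 2 by omega]
      exact hJp2
    have hmul2 : J ^ (p ^ 2 - 1) * J = 1 := by
      rw [← pow_succ]
      rw [show p ^ 2 - 1 + 1 = p ^ 2 by omega]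
      exact hJp2
    set u : (Matrix (Fin (p + 1)) (Fin (p + 1)) K)ˣ := ⟨J, J ^ (p ^ 2 - 1), hmul1, hmul2⟩
      with hu
    have hupow : ∀ m : ℕ, (u ^ m = 1) ↔ (J ^ m = 1) := by
      intro m
      rw [Units.ext_iff, Units.val_pow_eq_pow_val, Units.val_one]
    have hord : orderOf u = p ^ 2 := by
      have := orderOf_eq_prime_pow (x := u) (p := p) (n := 1)
        (by rw [pow_one, hupow]; exact hJp) (by rw [hupow]; exact hJp2)
      simpa using this
    have hpm : ∀ k : ℕ, u ^ (k % p ^ 2) = u ^ k := by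
      intro k
      conv_lhs => rw [← hord]
      exact pow_mod_orderOf u k
    refine ⟨{ toFun := fun x => u ^ (Multiplicative.toAdd x).val,
              map_one' := by simp,
              map_mul' := fun a b => by
                show u ^ (Multiplicative.toAdd (a * b)).val = _
                rw [toAdd_mul, ZMod.val_add, hpm, pow_add] }, ?_, ?_⟩
    · intro a b hab
      have hmod := pow_eq_pow_iff_modEq.mp hab
      rw [hord] at hmod
      have h1 := ZMod.val_lt (Multiplicative.toAdd a)
      have h2 := ZMod.val_lt (Multiplicative.toAdd b)
      have heq : (Multiplicative.toAdd a).val = (Multiplicative.toAdd b).val := by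
        unfold Nat.ModEq at hmod
        rwa [Nat.mod_eq_of_lt h1, Nat.mod_eq_of_lt h2] at hmod
      exact Multiplicative.toAdd.injective (ZMod.val_injective _ heq)
    · intro g
      show IsUnipotentUpper ((u ^ (Multiplicative.toAdd g).val :
        (Matrix (Fin (p + 1)) (Fin (p + 1)) K)ˣ) : Matrix (Fin (p + 1)) (Fin (p + 1)) K)
      rw [Units.val_pow_eq_pow_val]
      apply unip_pow
      constructor
      · intro i j h
        have hji : (j : ℕ) < (i : ℕ) := h
        show ((1 : Matrix (Fin (p + 1)) (Fin (p + 1)) K) + N) i j = 0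
        rw [Matrix.add_apply, hNstrict i j (le_of_lt hji),
          Matrix.one_apply_ne (fun he => by rw [he] at hji; omega), add_zero]
      · intro i
        show ((1 : Matrix (Fin (p + 1)) (Fin (p + 1)) K) + N) i i = 1
        rw [Matrix.add_apply, hNstrict i i le_rfl, Matrix.one_apply_eq, add_zero]
  · -- no embedding into U_r for r ≤ p
    rintro r hr ⟨φ, hinj, hunip⟩
    rcases Nat.eq_zero_or_pos r with rfl | hrpos
    · haveI : Subsingleton (Matrix (Fin 0) (Fin 0) K) := ⟨fun a b => by ext i j; exact i.elim0⟩
      haveI : Subsingleton (Matrix (Fin 0) (Fin 0) K)ˣ :=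
        ⟨fun a b => Units.ext (Subsingleton.elim _ _)⟩
      have h10 : (1 : ZMod (p ^ 2)) = 0 :=
        Multiplicative.ofAdd.injective (hinj (Subsingleton.elim _ _))
      have : (p ^ 2) ∣ 1 := by
        rw [← Nat.cast_one (R := ZMod (p ^ 2))] at h10
        exact (ZMod.natCast_eq_zero_iff 1 (p ^ 2)).mp h10
      have := Nat.le_of_dvd one_pos this
      nlinarith
    · haveI : Nonempty (Fin r) := Fin.pos_iff_nonempty.mp hrpos
      set g : Multiplicative (ZMod (p ^ 2)) := Multiplicative.ofAdd 1 with hg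
      have hordg : orderOf g = p ^ 2 := by
        rw [hg, orderOf_ofAdd_eq_addOrderOf, ZMod.addOrderOf_one]
      have hordφ : orderOf (φ g) = p ^ 2 := by
        rw [orderOf_injective φ hinj g, hordg]
      set M : Matrix (Fin r) (Fin r) K := ((φ g : (Matrix (Fin r) (Fin r) K)ˣ) :
        Matrix (Fin r) (Fin r) K) with hM
      obtain ⟨hlow, hdiag⟩ := hunip g
      set Nm : Matrix (Fin r) (Fin r) K := M - 1 with hNm
      have hstrict : ∀ i j : Fin r, (j : ℕ) ≤ i → Nm i j = 0 := by
        intro i j h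
        rcases eq_or_lt_of_le h with he | hlt
        · have hij : j = i := Fin.ext he
          subst hij
          rw [hNm, Matrix.sub_apply, hM, hdiag j, Matrix.one_apply_eq, sub_self]
        · rw [hNm, Matrix.sub_apply, hM, hlow i j hlt,
            Matrix.one_apply_ne (fun he2 => by rw [he2] at hlt; omega), sub_zero]
      have hNr : Nm ^ r = 0 := strict_pow_eq_zero hstrict le_rfl
      have hNp : Nm ^ p = 0 := by
        obtain ⟨m, hm⟩ := Nat.exists_eq_add_of_le hr
        rw [hm, pow_add, hNr, zero_mul]
      have hM1 : M = 1 + Nm := by rw [hNm]; abel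
      have hMp : M ^ p = 1 := by
        rw [hM1, add_pow_char_of_commute _ (Commute.one_left Nm), one_pow, hNp, add_zero]
      have hunit : (φ g) ^ p = 1 := by
        rw [Units.ext_iff, Units.val_pow_eq_pow_val, Units.val_one]
        exact hMp
      have hdvd : p ^ 2 ∣ p := hordφ ▸ orderOf_dvd_of_pow_eq_one hunit
      have := Nat.le_of_dvd hp.pos hdvd
      nlinarith
end

section
/- Let p be a prime and r, s ≥ 1 integers. The (r+s-1)-th term of the descending p-central series of U_r(Z/p^s Z) is trivial, where the descending p-central series of a group G is defined by G^{(1)} = G, G^{(i+1)} = (G^{(i)})^p [G^{(i)}, G]. -/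
/-- The group `U_n(R)` of upper-triangular unipotent `n × n` matrices over `R`. -/
def UnipotentGrp (R : Type*) [CommRing R] (n : ℕ) : Subgroup (Matrix (Fin n) (Fin n) R)ˣ :=
  Subgroup.closure {A : (Matrix (Fin n) (Fin n) R)ˣ |
    IsUnipotentUpper ((A : Matrix (Fin n) (Fin n) R))}

open scoped commutatorElement

/-- One step of the descending `p`-central series: `H ↦ H^p [H, G]`. -/
def pCentralStep (p : ℕ) {G : Type*} [Group G] (H : Subgroup G) : Subgroup G :=
  Subgroup.closure ({g | ∃ x ∈ H, g = x ^ p} ∪ {g | ∃ x ∈ H, ∃ y : G, g = ⁅x, y⁆})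

/-- The descending `p`-central series `G^(1) = G`, `G^(i+1) = (G^(i))^p [G^(i), G]`,
indexed so that `pCentralSeries p G i = G^(i)` for `i ≥ 1` (with junk value `⊤` at `0`). -/
def pCentralSeries (p : ℕ) (G : Type*) [Group G] : ℕ → Subgroup G
  | 0 => ⊤
  | 1 => ⊤
  | (n + 2) => pCentralStep p (pCentralSeries p G (n + 1))

/-!
Filter the strictly upper triangular matrices by weight, where entry `(i, j)` has weight `j - i` and
`t` has weight `1`: `J_k` is the set of those whose `(i, j)` entry is divisible by `t ^ (k - (j - i))`.
Then `J_k J_l ⊆ J_{k+l}`, so `F_k = 1 + J_k` is a descending chain of subgroups of the unit group with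
`[F_k, F_l] ⊆ F_{k+l}`; if `t ∣ p`, the binomial theorem and `p ∣ choose p m` for `0 < m < p` give
`F_k ^ p ⊆ F_{k+1}` for `k ≥ 1`. Since `U_n ⊆ F_1`, the `k`-th term of the `p`-central series of
`U_n` lies in `F_k`. Over `ℤ/p^s` with `t = p`, nonzero entries have weight below `(n - 1) + s`, so
`F_{n+s-1}` is trivial.
-/

section Filtration

variable {R : Type*} [CommRing R] {n : ℕ}

def upperFiltration (t : R) (k : ℕ) : AddSubgroup (Matrix (Fin n) (Fin n) R) where
  carrier := {N | (∀ i j, j ≤ i → N i j = 0) ∧ ∀ i j : Fin n, t ^ (k - (j - i : ℕ)) ∣ N i j}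
  zero_mem' := ⟨fun _ _ _ => rfl, fun _ _ => dvd_zero _⟩
  add_mem' hN hM :=
    ⟨fun i j h => by simp [hN.1 i j h, hM.1 i j h], fun i j => dvd_add (hN.2 i j) (hM.2 i j)⟩
  neg_mem' hN := ⟨fun i j h => by simp [hN.1 i j h], fun i j => (dvd_neg).2 (hN.2 i j)⟩

variable {t : R} {k l : ℕ} {N M : Matrix (Fin n) (Fin n) R}

theorem upperFiltration_antitone : Antitone (upperFiltration (n := n) t) :=
  fun _ _ hkl _ hN => ⟨hN.1, fun i j => (pow_dvd_pow t (by omega)).trans (hN.2 i j)⟩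

theorem mul_mem_upperFiltration (hN : N ∈ upperFiltration t k) (hM : M ∈ upperFiltration t l) :
    N * M ∈ upperFiltration t (k + l) := by
  refine ⟨fun i j hji => ?_, fun i j => ?_⟩ <;> rw [Matrix.mul_apply]
  · refine Finset.sum_eq_zero fun m _ => ?_
    rcases le_or_gt m i with h | h
    · rw [hN.1 i m h, zero_mul]
    · rw [hM.1 m j (hji.trans_lt h).le, mul_zero]
  refine Finset.dvd_sum fun m _ => ?_
  rcases le_or_gt m i with h | h
  · rw [hN.1 i m h, zero_mul]; exact dvd_zero _
  rcases le_or_gt j m with h' | h'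
  · rw [hM.1 m j h', mul_zero]; exact dvd_zero _
  calc t ^ (k + l - (j - i : ℕ)) ∣ t ^ (k - (m - i : ℕ)) * t ^ (l - (j - m : ℕ)) := by
        rw [← pow_add]; exact pow_dvd_pow t (by omega)
    _ ∣ N i m * M m j := mul_dvd_mul (hN.2 i m) (hM.2 m j)

theorem pow_succ_mem_upperFiltration (hN : N ∈ upperFiltration t k) :
    ∀ m : ℕ, N ^ (m + 1) ∈ upperFiltration t ((m + 1) * k)
  | 0 => by simpa using hN
  | m + 1 => by
    rw [pow_succ, add_one_mul]
    exact mul_mem_upperFiltration (pow_succ_mem_upperFiltration hN m) hN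

theorem nsmul_mem_upperFiltration_succ {c : ℕ} (hc : t ∣ (c : R))
    (hN : N ∈ upperFiltration t k) : c • N ∈ upperFiltration t (k + 1) := by
  refine ⟨fun i j h => by simp [hN.1 i j h], fun i j => ?_⟩
  rw [Matrix.smul_apply, nsmul_eq_mul']
  calc t ^ (k + 1 - (j - i : ℕ)) ∣ t ^ (k - (j - i : ℕ)) * t := by
        rw [← pow_succ]; exact pow_dvd_pow t (by omega)
    _ ∣ N i j * c := mul_dvd_mul (hN.2 i j) hc

theorem upperFiltration_eq_bot {s : ℕ} (ht : t ^ s = 0) (hk : n + s ≤ k + 1) :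
    upperFiltration (n := n) t k = ⊥ := by
  refine (AddSubgroup.eq_bot_iff_forall _).2 fun N hN => Matrix.ext fun i j => ?_
  have h0 : t ^ (k - (j - i : ℕ)) = 0 := pow_eq_zero_of_le (by omega) ht
  simpa [h0] using hN.2 i j

theorem upperFiltration_le_zero_one : upperFiltration t k ≤ upperFiltration (n := n) (0 : R) 1 := by
  refine fun N hN => ⟨hN.1, fun i j => ?_⟩
  rcases le_or_gt j i with h | h
  · rw [hN.1 i j h]; exact dvd_zero _
  · rw [show 1 - (j - i : ℕ) = 0 by omega, pow_zero]; exact one_dvd _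

theorem pow_eq_zero_of_mem_upperFiltration (hN : N ∈ upperFiltration t k) : N ^ n = 0 := by
  cases n with
  | zero => exact Subsingleton.elim _ _
  | succ m =>
    -- `J_n` over `t = 0` is zero, so strictly upper triangular matrices are nilpotent.
    have h := pow_succ_mem_upperFiltration (upperFiltration_le_zero_one hN) m
    rwa [upperFiltration_eq_bot (pow_one (0 : R)) (by omega), AddSubgroup.mem_bot] at h

end Filtration

section UnitFiltration

variable {R : Type*} [CommRing R] {n : ℕ} {t : R} {k l : ℕ}

theorem mul_sub_one_mem_upperFiltration {A B : Matrix (Fin n) (Fin n) R}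
    (hA : A - 1 ∈ upperFiltration t k) (hB : B - 1 ∈ upperFiltration t k) :
    A * B - 1 ∈ upperFiltration t k := by
  have h : A * B - 1 = (A - 1) * (B - 1) + (A - 1) + (B - 1) := by noncomm_ring
  rw [h]
  exact add_mem (add_mem (upperFiltration_antitone (by omega) (mul_mem_upperFiltration hA hB)) hA)
    hB

theorem inv_sub_one_mem_upperFiltration {A : (Matrix (Fin n) (Fin n) R)ˣ}
    (hA : (A : Matrix (Fin n) (Fin n) R) - 1 ∈ upperFiltration t k) :
    ((A⁻¹ : (Matrix (Fin n) (Fin n) R)ˣ) : Matrix (Fin n) (Fin n) R) - 1 ∈ upperFiltration t k := by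
  set N := (A : Matrix (Fin n) (Fin n) R) - 1
  have hnil : (-N) ^ (n + 1) = 0 := by
    rw [pow_succ, pow_eq_zero_of_mem_upperFiltration (neg_mem hA), zero_mul]
  -- `A = 1 - (-N)` with `-N` nilpotent, so `A⁻¹` is a finite geometric series in `-N`.
  have hinv : ((A⁻¹ : (Matrix (Fin n) (Fin n) R)ˣ) : Matrix (Fin n) (Fin n) R) =
      ∑ i ∈ Finset.range (n + 1), (-N) ^ i := by
    refine Units.inv_eq_of_mul_eq_one_right ?_
    rw [show (A : Matrix (Fin n) (Fin n) R) = 1 - -N by simp [N], mul_neg_geom_sum, hnil, sub_zero]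
  rw [hinv, Finset.sum_range_succ', pow_zero, add_sub_cancel_right]
  exact sum_mem fun i _ =>
    upperFiltration_antitone (by nlinarith) (pow_succ_mem_upperFiltration (neg_mem hA) i)

variable (t) in
def unitUpperFiltration (k : ℕ) : Subgroup (Matrix (Fin n) (Fin n) R)ˣ where
  carrier := {A | (A : Matrix (Fin n) (Fin n) R) - 1 ∈ upperFiltration t k}
  one_mem' := by simp [zero_mem]
  mul_mem' := mul_sub_one_mem_upperFiltration
  inv_mem' := inv_sub_one_mem_upperFiltration

theorem mem_unitUpperFiltration {A : (Matrix (Fin n) (Fin n) R)ˣ} :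
    A ∈ unitUpperFiltration t k ↔ (A : Matrix (Fin n) (Fin n) R) - 1 ∈ upperFiltration t k :=
  Iff.rfl

theorem unitUpperFiltration_antitone : Antitone (unitUpperFiltration (n := n) t) :=
  fun _ _ hkl _ hA => upperFiltration_antitone hkl hA

theorem unitUpperFiltration_eq_bot {s : ℕ} (ht : t ^ s = 0) (hk : n + s ≤ k + 1) :
    unitUpperFiltration (n := n) t k = ⊥ := by
  refine (Subgroup.eq_bot_iff_forall _).2 fun A hA => Units.ext ?_
  rw [mem_unitUpperFiltration, upperFiltration_eq_bot ht hk, AddSubgroup.mem_bot] at hA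
  exact sub_eq_zero.1 hA

theorem pow_mem_unitUpperFiltration_succ {p : ℕ} (hp : p.Prime) (ht : t ∣ (p : R)) (hk : 1 ≤ k)
    {A : (Matrix (Fin n) (Fin n) R)ˣ} (hA : A ∈ unitUpperFiltration t k) :
    A ^ p ∈ unitUpperFiltration t (k + 1) := by
  set N := (A : Matrix (Fin n) (Fin n) R) - 1
  have hA' : (A : Matrix (Fin n) (Fin n) R) = N + 1 := by simp [N]
  rw [mem_unitUpperFiltration, Units.val_pow_eq_pow_val, hA', (Commute.one_right N).add_pow,
    Finset.sum_range_succ']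
  simp only [pow_zero, one_pow, mul_one, Nat.choose_zero_right, Nat.cast_one, add_sub_cancel_right,
    ← nsmul_eq_mul']
  refine sum_mem fun m hm => ?_
  have hNm := pow_succ_mem_upperFiltration hA m
  rcases Nat.lt_or_eq_of_le (Finset.mem_range.1 hm) with hm | hm
  · have hc : t ∣ (p.choose (m + 1) : R) :=
      ht.trans (Nat.cast_dvd_cast (hp.dvd_choose_self m.succ_ne_zero (by omega)))
    exact upperFiltration_antitone (by nlinarith) (nsmul_mem_upperFiltration_succ hc hNm)
  · subst hm
    rw [Nat.choose_self, one_smul]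
    exact upperFiltration_antitone (by nlinarith [hp.two_le]) hNm

theorem commutatorElement_mem_unitUpperFiltration {A B : (Matrix (Fin n) (Fin n) R)ˣ}
    (hA : A ∈ unitUpperFiltration t k) (hB : B ∈ unitUpperFiltration t l) :
    ⁅A, B⁆ ∈ unitUpperFiltration t (k + l) := by
  set a := (A : Matrix (Fin n) (Fin n) R)
  set b := (B : Matrix (Fin n) (Fin n) R)
  set w := ((A⁻¹ * B⁻¹ : (Matrix (Fin n) (Fin n) R)ˣ) : Matrix (Fin n) (Fin n) R)
  have hw : w - 1 ∈ upperFiltration t 0 :=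
    mul_mem (unitUpperFiltration_antitone (Nat.zero_le k) (inv_mem hA))
      (unitUpperFiltration_antitone (Nat.zero_le l) (inv_mem hB))
  have hbaw : b * a * w = 1 := by
    simp only [a, b, w, ← Units.val_mul, mul_assoc, mul_inv_cancel_left, mul_inv_cancel, Units.val_one]
  have hcomm : ((⁅A, B⁆ : (Matrix (Fin n) (Fin n) R)ˣ) : Matrix (Fin n) (Fin n) R) - 1 =
      ((a - 1) * (b - 1) - (b - 1) * (a - 1)) * (w - 1) +
        ((a - 1) * (b - 1) - (b - 1) * (a - 1)) :=
    calc _ = a * b * w - b * a * w := by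
          rw [hbaw]; simp only [a, b, w, commutatorElement_def, Units.val_mul, mul_assoc]
      _ = _ := by noncomm_ring
  have hab : (a - 1) * (b - 1) - (b - 1) * (a - 1) ∈ upperFiltration t (k + l) :=
    sub_mem (mul_mem_upperFiltration hA hB) (add_comm k l ▸ mul_mem_upperFiltration hB hA)
  rw [mem_unitUpperFiltration, hcomm]
  exact add_mem (add_zero (k + l) ▸ mul_mem_upperFiltration hab hw) hab

theorem unipotentGrp_le_unitUpperFiltration_one (t : R) :
    UnipotentGrp R n ≤ unitUpperFiltration t 1 := by
  refine (Subgroup.closure_le _).2 fun A ⟨hlower, hdiag⟩ => ?_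
  have hstrict : ∀ i j, j ≤ i → ((A : Matrix (Fin n) (Fin n) R) - 1) i j = 0 := by
    intro i j hji
    rcases hji.lt_or_eq with h | rfl
    · simp [hlower i j h, Matrix.one_apply_ne h.ne']
    · simp [hdiag]
  refine ⟨hstrict, fun i j => ?_⟩
  rcases le_or_gt j i with h | h
  · rw [hstrict i j h]; exact dvd_zero _
  · rw [show 1 - (j - i : ℕ) = 0 by omega, pow_zero]; exact one_dvd _

end UnitFiltration

theorem pCentralSeries_le {G : Type*} [Group G] {p : ℕ} {F : ℕ → Subgroup G} (hF : Antitone F)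
    (hF1 : F 1 = ⊤) (hpow : ∀ k, 1 ≤ k → ∀ x ∈ F k, x ^ p ∈ F (k + 1))
    (hcomm : ∀ k, 1 ≤ k → ∀ x ∈ F k, ∀ y, ⁅x, y⁆ ∈ F (k + 1)) :
    ∀ k, pCentralSeries p G k ≤ F k
  | 0 => by rw [pCentralSeries, ← hF1]; exact hF zero_le_one
  | 1 => by rw [pCentralSeries, hF1]
  | k + 2 => by
    refine (Subgroup.closure_le _).2 ?_
    rintro _ (⟨x, hx, rfl⟩ | ⟨x, hx, y, rfl⟩)
    · exact hpow (k + 1) le_add_self x (pCentralSeries_le hF hF1 hpow hcomm (k + 1) hx)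
    · exact hcomm (k + 1) le_add_self x (pCentralSeries_le hF hF1 hpow hcomm (k + 1) hx) y

theorem pCentralSeries_le_unitUpperFiltration {R : Type*} [CommRing R] {n p : ℕ} (hp : p.Prime)
    {t : R} (ht : t ∣ (p : R)) (G : Subgroup (Matrix (Fin n) (Fin n) R)ˣ)
    (hG : G ≤ unitUpperFiltration t 1) (k : ℕ) :
    pCentralSeries p G k ≤ (unitUpperFiltration t k).subgroupOf G := by
  refine pCentralSeries_le (fun _ _ hkl => Subgroup.comap_mono (unitUpperFiltration_antitone hkl))
    (Subgroup.subgroupOf_eq_top.2 hG) (fun k hk x hx => ?_) (fun k _ x hx y => ?_) k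
  · exact Subgroup.mem_subgroupOf.2 (pow_mem_unitUpperFiltration_succ hp ht hk hx)
  · exact Subgroup.mem_subgroupOf.2 (commutatorElement_mem_unitUpperFiltration hx (hG y.2))

theorem stmt11_general (p r s : ℕ) (hp : p.Prime) :
    pCentralSeries p ↥(UnipotentGrp (ZMod (p ^ s)) r) (r + s - 1) = ⊥ := by
  have hps : (p : ZMod (p ^ s)) ^ s = 0 := by rw [← Nat.cast_pow, ZMod.natCast_self]
  refine eq_bot_mono (pCentralSeries_le_unitUpperFiltration hp dvd_rfl _
    (unipotentGrp_le_unitUpperFiltration_one _) _) ?_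
  rw [unitUpperFiltration_eq_bot hps (by omega), Subgroup.bot_subgroupOf]

/-- For a prime `p` and `r, s ≥ 1`, the `(r+s-1)`-th term of the descending
`p`-central series of `U_r(ℤ/p^sℤ)` is trivial. -/
theorem stmt11 (p r s : ℕ) (hp : p.Prime) (hr : 1 ≤ r) (hs : 1 ≤ s) :
    pCentralSeries p ↥(UnipotentGrp (ZMod (p ^ s)) r) (r + s - 1) = ⊥ :=
  stmt11_general p r s hp
end

section
/- Let p be a prime and n ≥ 1. The n-th term of the p-Zassenhaus (dimension subgroup) filtration of U_n(F_p) is trivial: U_n(F_p)_{(n)} = 1. -/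
open scoped commutatorElement

/-- Fuel-based recursion computing the `p`-Zassenhaus filtration:
`G_(1) = G`, `G_(n) = (G_(⌈n/p⌉))^p · ∏_{i+j=n, i,j ≥ 1} [G_(i), G_(j)]`.
Since for `p ≥ 2` every recursive index is strictly smaller than `n`, fuel `n` suffices,
and `zassenhaus p G n = G_(n)` for all `n ≥ 1` (with `⊤` as junk value at `0`). -/
def zassAux (p : ℕ) (G : Type*) [Group G] : ℕ → ℕ → Subgroup G
  | 0, _ => ⊤
  | (fuel + 1), n =>
    if n ≤ 1 then ⊤
    else
      Subgroup.closure
        ({g | ∃ x ∈ zassAux p G fuel ((n + p - 1) / p), g = x ^ p} ∪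
         {g | ∃ i j : ℕ, 1 ≤ i ∧ 1 ≤ j ∧ i + j = n ∧
              ∃ x ∈ zassAux p G fuel i, ∃ y ∈ zassAux p G fuel j, g = ⁅x, y⁆})

/-- The `p`-Zassenhaus filtration `G_(n)` of `G` (for `n ≥ 1`; junk value `⊤` at `0`). -/
def zassenhaus (p : ℕ) (G : Type*) [Group G] (n : ℕ) : Subgroup G := zassAux p G n n

/-! The congruence subgroups `1 + N`, with `N` vanishing below the `k`-th superdiagonal, form a
descending filtration of `U_n(R)` starting at the whole group. Commutators of its `a`-th and
`b`-th terms lie in the `(a + b)`-th, since `xy - yx = (x - 1)(y - 1) - (y - 1)(x - 1)`; and in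
characteristic `p`, `(1 + N)^p = 1 + N^p` sends the `k`-th term into the `pk`-th. The
`p`-Zassenhaus filtration is the smallest filtration with these properties, so its `n`-th term
lies in the `n`-th congruence subgroup, which is trivial for `n × n` matrices. -/

section Zassenhaus

variable {G : Type*} [Group G] {p : ℕ}

lemma ceil_div_lt_self (hp : 1 < p) {m : ℕ} (hm : 1 < m) : (m + p - 1) / p < m := by
  obtain ⟨a, rfl⟩ := Nat.exists_eq_add_of_lt hm
  obtain ⟨b, rfl⟩ := Nat.exists_eq_add_of_lt hp
  rw [Nat.div_lt_iff_lt_mul (by omega)]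
  ring_nf
  omega

lemma le_mul_ceil_div (hp : 1 < p) (m : ℕ) : m ≤ p * ((m + p - 1) / p) := by
  have := Nat.div_add_mod (m + p - 1) p
  have := Nat.mod_lt (m + p - 1) (by omega : 0 < p)
  omega

lemma zassAux_le_of_filtration (hp : 1 < p) (H : ℕ → Subgroup G) (h_anti : Antitone H)
    (h_one : H 1 = ⊤) (h_pow : ∀ i, ∀ x ∈ H i, x ^ p ∈ H (p * i))
    (h_comm : ∀ i j, ∀ x ∈ H i, ∀ y ∈ H j, ⁅x, y⁆ ∈ H (i + j)) :
    ∀ fuel m, m ≤ fuel + 1 → zassAux p G fuel m ≤ H m := by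
  have h_top : ∀ m ≤ 1, H m = ⊤ := fun m hm => top_le_iff.1 (h_one ▸ h_anti hm)
  intro fuel
  induction fuel with
  | zero => intro m hm; simp [zassAux, h_top m hm]
  | succ fuel ih =>
    intro m hm
    rw [zassAux]
    split_ifs with hm1
    · simp [h_top m hm1]
    rw [Subgroup.closure_le]
    rintro g (⟨x, hx, rfl⟩ | ⟨i, j, hi, hj, rfl, x, hx, y, hy, rfl⟩)
    · have hq := ceil_div_lt_self hp (not_le.1 hm1)
      exact h_anti (le_mul_ceil_div hp m) (h_pow _ x (ih _ (by omega) hx))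
    · exact h_comm i j x (ih i (by omega) hx) y (ih j (by omega) hy)

theorem zassenhaus_le_of_filtration (hp : 1 < p) (H : ℕ → Subgroup G) (h_anti : Antitone H)
    (h_one : H 1 = ⊤) (h_pow : ∀ i, ∀ x ∈ H i, x ^ p ∈ H (p * i))
    (h_comm : ∀ i j, ∀ x ∈ H i, ∀ y ∈ H j, ⁅x, y⁆ ∈ H (i + j)) (m : ℕ) :
    zassenhaus p G m ≤ H m :=
  zassAux_le_of_filtration hp H h_anti h_one h_pow h_comm m m (by omega)

end Zassenhaus

namespace Matrix

variable {R : Type*} {n : ℕ}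

section Ring

variable [Ring R]

variable (R n) in
def upperBand (k : ℕ) : AddSubgroup (Matrix (Fin n) (Fin n) R) where
  carrier := {N | ∀ i j : Fin n, (j : ℕ) < i + k → N i j = 0}
  zero_mem' _ _ _ := rfl
  add_mem' hM hN i j h := by simp [hM i j h, hN i j h]
  neg_mem' hN i j h := by simp [hN i j h]

lemma mem_upperBand {k : ℕ} {N : Matrix (Fin n) (Fin n) R} :
    N ∈ upperBand R n k ↔ ∀ i j : Fin n, (j : ℕ) < i + k → N i j = 0 := Iff.rfl

lemma upperBand_antitone : Antitone (upperBand R n) :=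
  fun _ _ hkl _ hN i j h => hN i j (by omega)

lemma mem_upperBand_zero_iff {N : Matrix (Fin n) (Fin n) R} :
    N ∈ upperBand R n 0 ↔ N.BlockTriangular id := by
  simp only [mem_upperBand, BlockTriangular, id, add_zero, Fin.val_fin_lt]

lemma one_mem_upperBand_zero : (1 : Matrix (Fin n) (Fin n) R) ∈ upperBand R n 0 :=
  fun i j h => one_apply_ne (by rintro rfl; omega)

lemma mul_mem_upperBand {a b : ℕ} {M N : Matrix (Fin n) (Fin n) R} (hM : M ∈ upperBand R n a)
    (hN : N ∈ upperBand R n b) : M * N ∈ upperBand R n (a + b) := by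
  intro i j h
  rw [mul_apply]
  refine Finset.sum_eq_zero fun l _ => ?_
  by_cases hl : (l : ℕ) < i + a
  · rw [hM i l hl, zero_mul]
  · rw [hN l j (by omega), mul_zero]

lemma pow_mem_upperBand {k : ℕ} {N : Matrix (Fin n) (Fin n) R} (hN : N ∈ upperBand R n k)
    (m : ℕ) : N ^ m ∈ upperBand R n (m * k) := by
  induction m with
  | zero => simpa using one_mem_upperBand_zero
  | succ m ih => simpa [pow_succ, Nat.succ_mul] using mul_mem_upperBand ih hN

lemma mem_upperBand_zero_of_sub_one_mem {k : ℕ} {N : Matrix (Fin n) (Fin n) R}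
    (h : N - 1 ∈ upperBand R n k) : N ∈ upperBand R n 0 := by
  simpa using add_mem (upperBand_antitone (Nat.zero_le k) h) one_mem_upperBand_zero

lemma upperBand_self : upperBand R n n = ⊥ := by
  refine (AddSubgroup.eq_bot_iff_forall _).2 fun N hN => ?_
  ext i j
  exact hN i j (by omega)

end Ring

section CommRing

variable [CommRing R]

lemma val_inv_mem_upperBand_zero {x : (Matrix (Fin n) (Fin n) R)ˣ}
    (hx : (x : Matrix (Fin n) (Fin n) R) ∈ upperBand R n 0) :
    ((x⁻¹ : (Matrix (Fin n) (Fin n) R)ˣ) : Matrix (Fin n) (Fin n) R) ∈ upperBand R n 0 := by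
  let := x.invertible
  rw [coe_units_inv, mem_upperBand_zero_iff] at *
  exact blockTriangular_inv_of_blockTriangular hx

variable (R n) in
def unitsUpperBand (k : ℕ) : Subgroup (Matrix (Fin n) (Fin n) R)ˣ where
  carrier := {x | (x : Matrix (Fin n) (Fin n) R) - 1 ∈ upperBand R n k}
  one_mem' := by simp
  mul_mem' {x y} hx hy := by
    have h : ((x * y : (Matrix (Fin n) (Fin n) R)ˣ) : Matrix (Fin n) (Fin n) R) - 1 =
        (x - 1) * (y - 1) + ((x - 1) + (y - 1)) := by
      rw [Units.val_mul]; noncomm_ring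
    rw [Set.mem_ofPred_eq, h]
    exact add_mem (upperBand_antitone (Nat.le_add_left k k) (mul_mem_upperBand hx hy))
      (add_mem hx hy)
  inv_mem' {x} hx := by
    have h : ((x⁻¹ : (Matrix (Fin n) (Fin n) R)ˣ) : Matrix (Fin n) (Fin n) R) - 1 =
        -((x⁻¹ : (Matrix (Fin n) (Fin n) R)ˣ) * (x - 1)) := by
      rw [mul_sub, Units.inv_mul, mul_one, neg_sub]
    rw [Set.mem_ofPred_eq, h]
    simpa using neg_mem (mul_mem_upperBand
      (val_inv_mem_upperBand_zero (mem_upperBand_zero_of_sub_one_mem hx)) hx)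

lemma mem_unitsUpperBand {k : ℕ} {x : (Matrix (Fin n) (Fin n) R)ˣ} :
    x ∈ unitsUpperBand R n k ↔ (x : Matrix (Fin n) (Fin n) R) - 1 ∈ upperBand R n k := Iff.rfl

lemma unitsUpperBand_antitone : Antitone (unitsUpperBand R n) :=
  fun _ _ hkl _ hx => upperBand_antitone hkl hx

lemma unitsUpperBand_self : unitsUpperBand R n n = ⊥ := by
  refine (Subgroup.eq_bot_iff_forall _).2 fun x hx => Units.ext ?_
  simpa [mem_unitsUpperBand, upperBand_self, sub_eq_zero] using hx

lemma pow_mem_unitsUpperBand {p : ℕ} [Fact p.Prime] [CharP R p] {k : ℕ}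
    {x : (Matrix (Fin n) (Fin n) R)ˣ} (hx : x ∈ unitsUpperBand R n k) :
    x ^ p ∈ unitsUpperBand R n (p * k) := by
  rw [mem_unitsUpperBand, Units.val_pow_eq_pow_val]
  rcases isEmpty_or_nonempty (Fin n) with _ | _
  · exact fun i => isEmptyElim i
  · rw [← one_pow p, ← sub_pow_char_of_commute p (Commute.one_right _)]
    exact pow_mem_upperBand hx p

lemma commutatorElement_mem_unitsUpperBand {a b : ℕ} {x y : (Matrix (Fin n) (Fin n) R)ˣ}
    (hx : x ∈ unitsUpperBand R n a) (hy : y ∈ unitsUpperBand R n b) :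
    ⁅x, y⁆ ∈ unitsUpperBand R n (a + b) := by
  obtain ⟨w, hw_def⟩ : ∃ w, w = (y * x)⁻¹ := ⟨_, rfl⟩
  have hw : (w : Matrix (Fin n) (Fin n) R) ∈ upperBand R n 0 := by
    refine mem_upperBand_zero_of_sub_one_mem (k := 0) ?_
    rw [← mem_unitsUpperBand, hw_def]
    exact inv_mem (mul_mem (unitsUpperBand_antitone (Nat.zero_le b) hy)
      (unitsUpperBand_antitone (Nat.zero_le a) hx))
  have hyxw : (y : Matrix (Fin n) (Fin n) R) * x * w = 1 := by
    rw [← Units.val_mul, ← Units.val_mul, hw_def, mul_inv_cancel, Units.val_one]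
  have hcomm : ⁅x, y⁆ = x * y * w := by rw [hw_def]; group
  have h : ((⁅x, y⁆ : (Matrix (Fin n) (Fin n) R)ˣ) : Matrix (Fin n) (Fin n) R) - 1 =
      ((x - 1) * (y - 1) - (y - 1) * (x - 1)) * w := by
    have hXY : (x * y - y * x : Matrix (Fin n) (Fin n) R) =
        (x - 1) * (y - 1) - (y - 1) * (x - 1) := by noncomm_ring
    rw [hcomm, Units.val_mul, Units.val_mul, ← hXY, sub_mul, hyxw]
  rw [mem_unitsUpperBand, h]
  simpa using mul_mem_upperBand (sub_mem (mul_mem_upperBand hx hy)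
    (upperBand_antitone (Nat.add_comm a b).le (mul_mem_upperBand hy hx))) hw

lemma unipotentGrp_le_unitsUpperBand_one : UnipotentGrp R n ≤ unitsUpperBand R n 1 := by
  refine (Subgroup.closure_le _).2 fun x hx i j hij => ?_
  rcases (Nat.lt_succ_iff.1 hij).lt_or_eq with hlt | heq
  · rw [sub_apply, hx.1 i j hlt, one_apply_ne (by rintro rfl; omega), sub_zero]
  · rw [Fin.ext heq, sub_apply, hx.2 i, one_apply_eq, sub_self]

theorem zassenhaus_le_unitsUpperBand {p : ℕ} [Fact p.Prime] [CharP R p]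
    {G : Subgroup (Matrix (Fin n) (Fin n) R)ˣ} (hG : G ≤ unitsUpperBand R n 1) (m : ℕ) :
    zassenhaus p G m ≤ (unitsUpperBand R n m).subgroupOf G :=
  zassenhaus_le_of_filtration (Fact.out : p.Prime).one_lt _
    (fun _ _ hkl => Subgroup.subgroupOf_mono G (unitsUpperBand_antitone hkl))
    (Subgroup.subgroupOf_eq_top.2 hG)
    (fun _ _ hx => pow_mem_unitsUpperBand hx)
    (fun _ _ _ hx _ hy => commutatorElement_mem_unitsUpperBand hx hy) m

end CommRing

end Matrix

theorem stmt12_general (p n : ℕ) (hp : p.Prime) :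
    zassenhaus p ↥(UnipotentGrp (ZMod p) n) n = ⊥ := by
  have := Fact.mk hp
  have h := Matrix.zassenhaus_le_unitsUpperBand (p := p)
    (Matrix.unipotentGrp_le_unitsUpperBand_one (R := ZMod p) (n := n)) n
  rwa [Matrix.unitsUpperBand_self, Subgroup.bot_subgroupOf, le_bot_iff] at h

/-- For `p` prime and `n ≥ 1`, the `n`-th term of the `p`-Zassenhaus
filtration of `U_n(𝔽_p)` is trivial. -/
theorem stmt12 (p n : ℕ) (hp : p.Prime) (hn : 1 ≤ n) :
    zassenhaus p ↥(UnipotentGrp (ZMod p) n) n = ⊥ :=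
  stmt12_general p n hp
end

section
/- Let G be any group and p a prime. Then G_{(p+1)} ⊆ G^{(3)}, i.e., the (p+1)-st term of the p-Zassenhaus filtration is contained in the third term of the descending p-central series. -/
open scoped commutatorElement

section

variable {G : Type*} [Group G] (p : ℕ)

lemma pow_mem_pCentralStep {H : Subgroup G} {x : G} (hx : x ∈ H) :
    x ^ p ∈ pCentralStep p H :=
  Subgroup.subset_closure (Or.inl ⟨x, hx, rfl⟩)

lemma commutatorElement_mem_pCentralStep_left {H : Subgroup G} {x : G} (hx : x ∈ H) (y : G) :
    ⁅x, y⁆ ∈ pCentralStep p H :=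
  Subgroup.subset_closure (Or.inr ⟨x, hx, y, rfl⟩)

lemma commutatorElement_mem_pCentralStep_right {H : Subgroup G} (x : G) {y : G} (hy : y ∈ H) :
    ⁅x, y⁆ ∈ pCentralStep p H := by
  simpa only [commutatorElement_inv] using
    inv_mem (commutatorElement_mem_pCentralStep_left p hy x)

lemma zassAux_succ_le {K : Subgroup G} (fuel : ℕ) {n : ℕ} (hn : 2 ≤ n)
    (hpow : ∀ x ∈ zassAux p G fuel ((n + p - 1) / p), x ^ p ∈ K)
    (hcomm : ∀ i j, 1 ≤ i → 1 ≤ j → i + j = n →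
      ∀ x ∈ zassAux p G fuel i, ∀ y ∈ zassAux p G fuel j, ⁅x, y⁆ ∈ K) :
    zassAux p G (fuel + 1) n ≤ K := by
  rw [zassAux, if_neg (by omega), Subgroup.closure_le]
  rintro g (⟨x, hx, rfl⟩ | ⟨i, j, hi, hj, hij, x, hx, y, hy, rfl⟩)
  exacts [hpow x hx, hcomm i j hi hj hij x hx y hy]

lemma zassAux_le_pCentralSeries_two {fuel n : ℕ} (hfuel : fuel ≠ 0) (hn : 2 ≤ n) :
    zassAux p G fuel n ≤ pCentralSeries p G 2 := by
  obtain ⟨fuel, rfl⟩ := Nat.exists_eq_succ_of_ne_zero hfuel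
  exact zassAux_succ_le p fuel hn (fun x _ => pow_mem_pCentralStep p (Subgroup.mem_top x))
    (fun _ _ _ _ _ x _ y _ => commutatorElement_mem_pCentralStep_left p (Subgroup.mem_top x) y)

end

/-- For any group `G` and prime `p`, the `(p+1)`-st term of the
`p`-Zassenhaus filtration is contained in the third term of the descending `p`-central
series: `G_(p+1) ⊆ G^(3)`. -/
theorem stmt14 (G : Type*) [Group G] (p : ℕ) (hp : p.Prime) :
    zassenhaus p G (p + 1) ≤ pCentralSeries p G 3 := by
  have hp2 := hp.two_le
  have hG2 {n : ℕ} (hn : 2 ≤ n) : zassAux p G p n ≤ pCentralSeries p G 2 :=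
    zassAux_le_pCentralSeries_two p hp.ne_zero hn
  -- `⌈(p + 1) / p⌉ = 2`: the `p`-th powers in `G_(p+1)` are those of elements of `G_(2)`.
  have hceil : (p + 1 + p - 1) / p = 2 := by
    rw [show p + 1 + p - 1 = 2 * p by omega, Nat.mul_div_cancel _ hp.pos]
  refine zassAux_succ_le p p (n := p + 1) (by omega) (fun x hx => ?_)
    (fun i j hi hj hij x hx y hy => ?_)
  · rw [hceil] at hx
    exact pow_mem_pCentralStep p (hG2 le_rfl hx)
  · -- `i + j = p + 1 ≥ 3`, so one of the two factors already lies in `G^(2)`.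
    rcases le_or_gt 2 i with hi2 | hi1
    · exact commutatorElement_mem_pCentralStep_left p (hG2 hi2 hx) y
    · exact commutatorElement_mem_pCentralStep_right p x (hG2 (n := j) (by omega) hy)
end

section
/- Let G be a group, p a prime, and n ≥ 1. Every group homomorphism ρ: G → U_n(F_p) is trivial on G_{(n)}, the n-th term of the p-Zassenhaus filtration of G. -/
open scoped commutatorElement

/-! Let `U⁽ᵏ⁾` be the group of invertible matrices `x` such that `x - 1` vanishes below the `k`-th
superdiagonal. Because `xy - yx = (x - 1)(y - 1) - (y - 1)(x - 1)`, we have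
`[U⁽ⁱ⁾, U⁽ʲ⁾] ⊆ U⁽ⁱ⁺ʲ⁾`. In characteristic `p`, `x ^ p - 1 = (x - 1) ^ p`, so `(U⁽ⁱ⁾) ^ p ⊆ U⁽ᵖⁱ⁾`.
These are exactly the closure properties used to define the Zassenhaus filtration. Induction
along that definition shows that `ρ` maps `G_(k)` into `U⁽ᵏ⁾`, since `U_n(𝔽_p) ⊆ U⁽¹⁾`. Finally,
`U⁽ⁿ⁾ = 1` for `n × n` matrices. -/

section RestrictedFiltration

variable {G H : Type*} [Group G] [Group H] {p : ℕ}

/-- Lazard's `N_p`-series, without the normalisation `F 1 = ⊤`. -/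
structure IsRestrictedFiltration (p : ℕ) (F : ℕ → Subgroup G) : Prop where
  antitone : Antitone F
  commutator_mem {i j : ℕ} {x y : G} : x ∈ F i → y ∈ F j → ⁅x, y⁆ ∈ F (i + j)
  pow_mem {i : ℕ} {x : G} : x ∈ F i → x ^ p ∈ F (p * i)

theorem IsRestrictedFiltration.comap {F : ℕ → Subgroup H} (hF : IsRestrictedFiltration p F)
    (f : G →* H) : IsRestrictedFiltration p fun k => (F k).comap f where
  antitone _ _ hij := Subgroup.comap_mono (hF.antitone hij)
  commutator_mem hx hy := by
    simpa only [Subgroup.mem_comap, map_commutatorElement] using hF.commutator_mem hx hy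
  pow_mem hx := by simpa only [Subgroup.mem_comap, map_pow] using hF.pow_mem hx

theorem zassAux_le {F : ℕ → Subgroup G} (hp : 1 < p) (hF : IsRestrictedFiltration p F)
    (htop : F 1 = ⊤) (fuel k : ℕ) (hk : k ≤ fuel) : zassAux p G fuel k ≤ F k := by
  have hsmall : ∀ k ≤ 1, F k = ⊤ := fun k hk => top_le_iff.1 (htop ▸ hF.antitone hk)
  induction fuel generalizing k with
  | zero => simp [zassAux, hsmall k (by omega)]
  | succ fuel ih =>
    by_cases hk1 : k ≤ 1
    · simp [zassAux, hk1, hsmall k hk1]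
    rw [zassAux, if_neg hk1, Subgroup.closure_le]
    rintro _ (⟨x, hx, rfl⟩ | ⟨i, j, hi, hj, rfl, x, hx, y, hy, rfl⟩)
    · have hq : (k + p - 1) / p < k := Nat.add_pred_div_lt hp (by omega)
      have hkq : k ≤ p * ((k + p - 1) / p) := (ceilDiv_le_iff_le_mul (by omega)).1 le_rfl
      exact hF.antitone hkq (hF.pow_mem (ih _ (by omega) hx))
    · exact hF.commutator_mem (ih i (by omega) hx) (ih j (by omega) hy)

theorem zassenhaus_le {F : ℕ → Subgroup G} (hp : 1 < p) (hF : IsRestrictedFiltration p F)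
    (htop : F 1 = ⊤) (k : ℕ) : zassenhaus p G k ≤ F k :=
  zassAux_le hp hF htop k k le_rfl

end RestrictedFiltration

namespace Matrix

def VanishesBelow {R : Type*} [Zero R] {n : ℕ} (k : ℕ) (N : Matrix (Fin n) (Fin n) R) : Prop :=
  ∀ i j : Fin n, (j : ℕ) < i + k → N i j = 0

namespace VanishesBelow

theorem zero_iff_blockTriangular {R : Type*} [Zero R] {n : ℕ} {N : Matrix (Fin n) (Fin n) R} :
    VanishesBelow 0 N ↔ N.BlockTriangular id := by
  simp [VanishesBelow, BlockTriangular]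

variable {R : Type*} [Ring R] {n k l : ℕ} {M N : Matrix (Fin n) (Fin n) R}

theorem mono (hkl : k ≤ l) (hN : VanishesBelow l N) : VanishesBelow k N :=
  fun i j hij => hN i j (by omega)

theorem add (hM : VanishesBelow k M) (hN : VanishesBelow k N) : VanishesBelow k (M + N) :=
  fun i j hij => by rw [add_apply, hM i j hij, hN i j hij, add_zero]

theorem neg (hN : VanishesBelow k N) : VanishesBelow k (-N) :=
  fun i j hij => by rw [neg_apply, hN i j hij, neg_zero]

theorem sub (hM : VanishesBelow k M) (hN : VanishesBelow k N) : VanishesBelow k (M - N) :=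
  sub_eq_add_neg M N ▸ hM.add hN.neg

theorem one : VanishesBelow 0 (1 : Matrix (Fin n) (Fin n) R) :=
  fun _ _ hij => one_apply_ne (Fin.ne_of_val_ne (by omega))

theorem mul (hM : VanishesBelow k M) (hN : VanishesBelow l N) :
    VanishesBelow (k + l) (M * N) := by
  intro i j hij
  rw [mul_apply]
  refine Finset.sum_eq_zero fun m _ => ?_
  by_cases hm : (m : ℕ) < i + k
  · rw [hM i m hm, zero_mul]
  · rw [hN m j (by omega), mul_zero]

theorem pow (hN : VanishesBelow k N) (m : ℕ) : VanishesBelow (m * k) (N ^ m) := by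
  induction m with
  | zero => simpa using one
  | succ m ih => simpa [pow_succ, Nat.succ_mul] using ih.mul hN

theorem eq_zero (hN : VanishesBelow n N) : N = 0 := by
  ext i j
  exact hN i j (by omega)

theorem zero_of_sub_one (hM : VanishesBelow k (M - 1)) : VanishesBelow 0 M :=
  sub_add_cancel M 1 ▸ (hM.mono k.zero_le).add one

theorem mul_sub_one (hM : VanishesBelow k (M - 1)) (hN : VanishesBelow k (N - 1)) :
    VanishesBelow k (M * N - 1) := by
  have h : M * N - 1 = (M - 1) * (N - 1) + ((M - 1) + (N - 1)) := by noncomm_ring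
  exact h ▸ ((hM.mul hN).mono (by omega)).add (hM.add hN)

theorem pow_char_sub_one {p : ℕ} (hp : p.Prime) [CharP R p] (hM : VanishesBelow k (M - 1)) :
    VanishesBelow (p * k) (M ^ p - 1) := by
  have hp0 : (p : Matrix (Fin n) (Fin n) R) = 0 := by
    rw [← diagonal_natCast, CharP.cast_eq_zero, diagonal_zero]
  obtain ⟨r, hr⟩ := (Commute.one_right (M - 1)).exists_add_pow_prime_eq hp
  rw [sub_add_cancel, hp0, zero_mul, zero_mul, zero_mul, add_zero, one_pow] at hr
  rw [hr, add_sub_cancel_right]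
  exact hM.pow p

end VanishesBelow

section Units

variable {R : Type*} [CommRing R] {n k : ℕ}

local notation "𝕄" => Matrix (Fin n) (Fin n) R

theorem VanishesBelow.inv_sub_one {x : 𝕄ˣ}
    (hx : VanishesBelow k ((x : 𝕄) - 1)) : VanishesBelow k (((x⁻¹ : 𝕄ˣ) : 𝕄) - 1) := by
  have hinv : VanishesBelow 0 ((x⁻¹ : 𝕄ˣ) : 𝕄) := by
    let _ := x.invertible
    rw [zero_iff_blockTriangular, coe_units_inv]
    exact blockTriangular_inv_of_blockTriangular (zero_iff_blockTriangular.1 hx.zero_of_sub_one)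
  have h : ((x⁻¹ : 𝕄ˣ) : 𝕄) - 1 = -((x⁻¹ : 𝕄ˣ) * ((x : 𝕄) - 1)) := by
    rw [mul_sub, mul_one, Units.inv_mul, neg_sub]
  rw [h, ← zero_add k]
  exact (hinv.mul hx).neg

theorem VanishesBelow.commutator_sub_one {i j : ℕ} {x y : 𝕄ˣ}
    (hx : VanishesBelow i ((x : 𝕄) - 1)) (hy : VanishesBelow j ((y : 𝕄) - 1)) :
    VanishesBelow (i + j) ((⁅x, y⁆ : 𝕄ˣ) - 1 : 𝕄) := by
  have h : ((⁅x, y⁆ : 𝕄ˣ) - 1 : 𝕄) = ((x : 𝕄) * y - y * x) * ((x⁻¹ : 𝕄ˣ) * (y⁻¹ : 𝕄ˣ)) := by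
    simp only [commutatorElement_def, Units.val_mul, sub_mul, mul_assoc,
      Units.mul_inv_cancel_left, Units.mul_inv]
  have hxy : VanishesBelow (i + j) ((x : 𝕄) * (y : 𝕄) - (y : 𝕄) * (x : 𝕄)) := by
    rw [show (x : 𝕄) * (y : 𝕄) - (y : 𝕄) * (x : 𝕄) =
      ((x : 𝕄) - 1) * ((y : 𝕄) - 1) - ((y : 𝕄) - 1) * ((x : 𝕄) - 1) by noncomm_ring]
    exact (hx.mul hy).sub ((hy.mul hx).mono (add_comm i j).le)
  rw [h, ← add_zero (i + j)]
  exact hxy.mul (hx.inv_sub_one.zero_of_sub_one.mul hy.inv_sub_one.zero_of_sub_one)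

variable (R n) in
def superdiagFiltration (k : ℕ) : Subgroup 𝕄ˣ where
  carrier := {x | VanishesBelow k ((x : 𝕄) - 1)}
  one_mem' _ _ _ := by simp
  mul_mem' {x y} hx hy := by
    show VanishesBelow k (((x * y : 𝕄ˣ) : 𝕄) - 1)
    exact Units.val_mul x y ▸ hx.mul_sub_one hy
  inv_mem' hx := hx.inv_sub_one

theorem mem_superdiagFiltration {x : 𝕄ˣ} :
    x ∈ superdiagFiltration R n k ↔ VanishesBelow k ((x : 𝕄) - 1) :=
  Iff.rfl

theorem isRestrictedFiltration_superdiagFiltration {p : ℕ} (hp : p.Prime) [CharP R p] :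
    IsRestrictedFiltration p (superdiagFiltration R n) where
  antitone _ _ hij _ hx := VanishesBelow.mono hij hx
  commutator_mem hx hy := hx.commutator_sub_one hy
  pow_mem {_ x} hx := by
    rw [mem_superdiagFiltration, Units.val_pow_eq_pow_val]
    exact hx.pow_char_sub_one hp

theorem superdiagFiltration_self : superdiagFiltration R n n = ⊥ :=
  (Subgroup.eq_bot_iff_forall _).2 fun _ hx =>
    Units.ext <| sub_eq_zero.1 (mem_superdiagFiltration.1 hx).eq_zero

theorem unipotentGrp_le_superdiagFiltration_one :
    UnipotentGrp R n ≤ superdiagFiltration R n 1 := by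
  refine (Subgroup.closure_le _).2 fun A ⟨hlower, hdiag⟩ i j hij => ?_
  rcases (Nat.lt_succ_iff.1 hij).lt_or_eq with hji | hji
  · rw [sub_apply, hlower i j hji, one_apply_ne (Fin.ne_of_val_ne hji.ne'), sub_zero]
  · rw [Fin.ext hji, sub_apply, hdiag, one_apply_eq, sub_self]

end Units

end Matrix

theorem stmt15_general (G : Type*) [Group G] (p n : ℕ) (hp : p.Prime)
    (ρ : G →* ↥(UnipotentGrp (ZMod p) n)) :
    ∀ g ∈ zassenhaus p G n, ρ g = 1 := by
  intro g hg
  let F k := (Matrix.superdiagFiltration (ZMod p) n k).comap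
    ((UnipotentGrp (ZMod p) n).subtype.comp ρ)
  have hF : IsRestrictedFiltration p F :=
    (Matrix.isRestrictedFiltration_superdiagFiltration hp).comap _
  have htop : F 1 = ⊤ :=
    eq_top_iff.2 fun g _ => Matrix.unipotentGrp_le_superdiagFiltration_one (ρ g).2
  have hρg : (ρ g : (Matrix (Fin n) (Fin n) (ZMod p))ˣ) ∈
      Matrix.superdiagFiltration (ZMod p) n n := zassenhaus_le hp.one_lt hF htop n hg
  rw [Matrix.superdiagFiltration_self, Subgroup.mem_bot] at hρg
  exact Subtype.ext hρg

/-- For any group `G`, prime `p` and `n ≥ 1`, every group homomorphism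
`ρ : G → U_n(𝔽_p)` is trivial on `G_(n)`, the `n`-th term of the `p`-Zassenhaus
filtration of `G`. -/
theorem stmt15 (G : Type*) [Group G] (p n : ℕ) (hp : p.Prime) (hn : 1 ≤ n)
    (ρ : G →* ↥(UnipotentGrp (ZMod p) n)) :
    ∀ g ∈ zassenhaus p G n, ρ g = 1 :=
  stmt15_general G p n hp ρ
end

section
/- Let S be a free group on x_1,…,x_d, Λ a commutative ring, and I = (i_1,…,i_k) a multi-index of height d. Define ρ: S → U_{k+1}(Λ) by setting, for μ < ν, ρ(σ)_{μν} = ε_{(i_μ,…,i_{ν-1})}(σ) (the Magnus coefficient), with diagonal entries 1 and entries below the diagonal 0. Then ρ is a group homomorphism. -/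
/-- The Magnus power series ring `Λ⟨⟨X_1,…,X_d⟩⟩` is modelled by coefficient functions
`List (Fin d) → Λ` (a multi-index `I = (i_1,…,i_k)` of height `d` is a list, with
`X_I = X_{i_1} ⋯ X_{i_k}`).  `convOne` is the constant series `1`. -/
def convOne (Λ : Type*) [CommRing Λ] (d : ℕ) : List (Fin d) → Λ :=
  fun w => if w = [] then 1 else 0

/-- Multiplication (convolution) of power series in noncommuting variables:
the coefficient of `X_I` in `f · g` is `Σ_{I₁I₂ = I} f(I₁) g(I₂)`. -/
def conv {Λ : Type*} [CommRing Λ] {d : ℕ} (f g : List (Fin d) → Λ) : List (Fin d) → Λ :=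
  fun w => ∑ k ∈ Finset.range (w.length + 1), f (w.take k) * g (w.drop k)

/-- The power series of a generator: `x_i ↦ 1 + X_i`, and
`x_i⁻¹ ↦ (1 + X_i)⁻¹ = Σ_m (-1)^m X_i^m`. -/
def genSeries {Λ : Type*} [CommRing Λ] {d : ℕ} (i : Fin d) (b : Bool) : List (Fin d) → Λ :=
  fun w =>
    if ∀ j ∈ w, j = i then
      (if b then (if w.length ≤ 1 then 1 else 0) else (-1) ^ w.length)
    else 0

/-- The Magnus expansion `ψ(σ) ∈ Λ⟨⟨X_1,…,X_d⟩⟩` of `σ` in the free group on `x_1,…,x_d`: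
the product of the series of the letters of the (reduced) word of `σ`. -/
def magnus (Λ : Type*) [CommRing Λ] {d : ℕ} (σ : FreeGroup (Fin d)) : List (Fin d) → Λ :=
  (σ.toWord.map fun q => genSeries (Λ := Λ) q.1 q.2).foldr conv (convOne Λ d)

/-- `ε_I(σ)`: the coefficient of `X_I` in the Magnus expansion of `σ`. -/
def eps (Λ : Type*) [CommRing Λ] {d : ℕ} (I : List (Fin d)) (σ : FreeGroup (Fin d)) : Λ :=
  magnus Λ σ I

/-! Coefficient series form a monoid under convolution, in which the series of `x_i` and
of `x_i⁻¹` are mutually inverse; hence the Magnus expansion is the lift of `x_i ↦ 1 + X_i` to the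
free group and is multiplicative. For any series `f`, the matrix whose `(μ, ν)` entry is the
coefficient of `X_{i_μ} ⋯ X_{i_{ν-1}}` turns convolution into matrix multiplication: splitting
the word `(i_μ, …, i_{ν-1})` after its `(λ - μ)`-th letter gives the `λ`-th term of the matrix
product. Since `ε_∅ = 1`, `ρ(σ)` is this matrix for `f = ψ(σ)`. -/

open Finset

section Convolution

variable {Λ : Type*} [CommRing Λ] {d : ℕ}

theorem conv_nil (f g : List (Fin d) → Λ) : conv f g [] = f [] * g [] := by
  simp [conv]

theorem conv_cons (f g : List (Fin d) → Λ) (a : Fin d) (w : List (Fin d)) :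
    conv f g (a :: w) = f [] * g (a :: w) + conv (fun t => f (a :: t)) g w := by
  rw [conv, List.length_cons, sum_range_succ', add_comm]
  rfl

theorem conv_assoc (f g h : List (Fin d) → Λ) (w : List (Fin d)) :
    conv (conv f g) h w = conv f (conv g h) w := by
  induction w generalizing f with
  | nil => simp only [conv_nil, mul_assoc]
  | cons a w ih =>
    have hsplit : conv (fun t => conv f g (a :: t)) h w
        = f [] * conv (fun t => g (a :: t)) h w + conv (conv (fun t => f (a :: t)) g) h w := by
      simp only [conv_cons]
      simp only [conv, add_mul, mul_assoc, sum_add_distrib, mul_sum]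
    rw [conv_cons, conv_cons, conv_nil, conv_cons, hsplit, ih]
    ring

theorem convOne_conv (f : List (Fin d) → Λ) : conv (convOne Λ d) f = f := by
  funext w
  rw [conv, sum_eq_single 0 (fun k hk hk0 => ?_) (by simp)]
  · simp [convOne]
  · have : w.take k ≠ [] := by
      simp only [ne_eq, List.take_eq_nil_iff, not_or]
      refine ⟨hk0, ?_⟩
      rintro rfl
      simp_all
    simp [convOne, this]

theorem conv_convOne (f : List (Fin d) → Λ) : conv f (convOne Λ d) = f := by
  funext w
  rw [conv, sum_eq_single w.length (fun k hk hkn => ?_) (by simp)]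
  · simp [convOne]
  · have : w.drop k ≠ [] := by
      simp only [mem_range] at hk
      simp only [ne_eq, List.drop_eq_nil_iff]
      omega
    simp [convOne, this]

end Convolution

-- A type synonym, so that `*` is convolution rather than the pointwise product of functions.
def MagnusSeries (Λ : Type*) (d : ℕ) := List (Fin d) → Λ

instance {Λ : Type*} [CommRing Λ] {d : ℕ} : Monoid (MagnusSeries Λ d) where
  one := convOne Λ d
  mul := conv
  mul_assoc f g h := funext (conv_assoc f g h)
  one_mul := convOne_conv
  mul_one := conv_convOne

-- The coefficients of `1 + X` and `(1 + X)⁻¹`: on words in the single letter `i`,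
-- `genSeries i b w = genCoeff Λ b w.length`.
def genCoeff (Λ : Type*) [Ring Λ] (b : Bool) (n : ℕ) : Λ :=
  if b then (if n ≤ 1 then 1 else 0) else (-1) ^ n

theorem sum_antidiagonal_genCoeff {Λ : Type*} [Ring Λ] (n : ℕ) :
    ∑ p ∈ antidiagonal n, genCoeff Λ true p.1 * genCoeff Λ false p.2 =
      if n = 0 then 1 else 0 := by
  cases n with
  | zero => simp [genCoeff]
  | succ n =>
    rw [Nat.sum_antidiagonal_succ, sum_eq_single (0, n) (fun p hp hp0 => ?_) (by simp)]
    · simp [genCoeff, pow_succ]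
    · obtain ⟨i, j⟩ := p
      have hi : i ≠ 0 := by
        rintro rfl
        exact hp0 (by simpa using hp)
      simp [genCoeff, hi]

section Generators

variable {Λ : Type*} [CommRing Λ] {d : ℕ}

theorem conv_genSeries_apply (i : Fin d) (b b' : Bool) (w : List (Fin d)) :
    conv (genSeries (Λ := Λ) i b) (genSeries i b') w =
      if ∀ j ∈ w, j = i then
        ∑ p ∈ antidiagonal w.length, genCoeff Λ b p.1 * genCoeff Λ b' p.2
      else 0 := by
  rw [conv, Nat.sum_antidiagonal_eq_sum_range_succ (fun p q => genCoeff Λ b p * genCoeff Λ b' q)]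
  split_ifs with hw
  · refine sum_congr rfl fun k hk => ?_
    have hk : k ≤ w.length := Nat.lt_succ_iff.mp (mem_range.mp hk)
    rw [genSeries, genSeries, if_pos (fun j hj => hw j (List.mem_of_mem_take hj)),
      if_pos (fun j hj => hw j (List.mem_of_mem_drop hj)), List.length_take, List.length_drop,
      min_eq_left hk]
    rfl
  · push Not at hw
    obtain ⟨j, hj, hji⟩ := hw
    refine sum_eq_zero fun k _ => ?_
    rw [← List.take_append_drop k w, List.mem_append] at hj
    rcases hj with hj | hj
    · have : genSeries (Λ := Λ) i b (w.take k) = 0 := if_neg fun h => hji (h j hj)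
      rw [this, zero_mul]
    · have : genSeries (Λ := Λ) i b' (w.drop k) = 0 := if_neg fun h => hji (h j hj)
      rw [this, mul_zero]

theorem conv_genSeries_not (i : Fin d) (b : Bool) :
    conv (genSeries (Λ := Λ) i b) (genSeries i !b) = convOne Λ d := by
  funext w
  have hsum : ∑ p ∈ antidiagonal w.length, genCoeff Λ b p.1 * genCoeff Λ (!b) p.2 =
      if w.length = 0 then 1 else 0 := by
    cases b
    · rw [← Nat.sum_antidiagonal_swap, ← sum_antidiagonal_genCoeff]
      exact sum_congr rfl fun p _ => mul_comm _ _
    · exact sum_antidiagonal_genCoeff _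
  rw [conv_genSeries_apply, hsum, convOne]
  by_cases hw : w = [] <;> simp [hw]

def genUnit (i : Fin d) : (MagnusSeries Λ d)ˣ where
  val := genSeries i true
  inv := genSeries i false
  val_inv := conv_genSeries_not i true
  inv_val := conv_genSeries_not i false

end Generators

section Magnus

variable {Λ : Type*} [CommRing Λ] {d : ℕ}

theorem magnus_eq_lift (σ : FreeGroup (Fin d)) :
    magnus Λ σ = (FreeGroup.lift (genUnit (Λ := Λ)) σ : MagnusSeries Λ d) := by
  conv_rhs => rw [← FreeGroup.mk_toWord (x := σ), FreeGroup.lift_mk]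
  rw [magnus]
  induction σ.toWord with
  | nil => rfl
  | cons q L ih =>
    rw [List.map_cons, List.foldr_cons, ih, List.map_cons, List.prod_cons, Units.val_mul]
    obtain ⟨i, _ | _⟩ := q <;> rfl

theorem magnus_mul (σ τ : FreeGroup (Fin d)) :
    magnus Λ (σ * τ) = conv (magnus Λ σ) (magnus Λ τ) := by
  simp only [magnus_eq_lift, map_mul, Units.val_mul]
  rfl

theorem magnus_one : magnus Λ (1 : FreeGroup (Fin d)) = convOne Λ d := by
  simp only [magnus_eq_lift, map_one, Units.val_one]
  rfl

theorem magnus_apply_nil (σ : FreeGroup (Fin d)) : magnus Λ σ [] = 1 := by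
  rw [magnus]
  induction σ.toWord with
  | nil => rfl
  | cons q L ih =>
    rw [List.map_cons, List.foldr_cons, conv_nil, ih, mul_one]
    cases q.2 <;> simp [genSeries]

end Magnus

section Extract

variable {α : Type*} (I : List α)

theorem List.take_extract {m n k : ℕ} (hk : k ≤ n - m) :
    (I.extract m n).take k = I.extract m (m + k) := by
  simp [List.take_take, min_eq_left hk]

theorem List.drop_extract (m n k : ℕ) : (I.extract m n).drop k = I.extract (m + k) n := by
  simp [List.drop_take, List.drop_drop, Nat.sub_sub]

theorem List.length_extract_of_le {m n : ℕ} (hn : n ≤ I.length) :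
    (I.extract m n).length = n - m := by
  simp only [List.extract_eq_take_drop, List.length_take, List.length_drop]
  omega

end Extract

def sliceMatrix {α Λ : Type*} [Zero Λ] (I : List α) (f : List α → Λ) :
    Matrix (Fin (I.length + 1)) (Fin (I.length + 1)) Λ :=
  Matrix.of fun μ ν => if (μ : ℕ) ≤ ν then f (I.extract μ ν) else 0

section SliceMatrix

variable {Λ : Type*} [CommRing Λ] {d : ℕ} (I : List (Fin d))

theorem sliceMatrix_mul_apply_of_le (f g : List (Fin d) → Λ) {μ ν : Fin (I.length + 1)}
    (hμν : (μ : ℕ) ≤ ν) :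
    (sliceMatrix I f * sliceMatrix I g) μ ν =
      ∑ k ∈ range (ν - μ + 1), f (I.extract μ (μ + k)) * g (I.extract (μ + k) ν) := by
  let F : ℕ → Λ := fun j =>
    if (μ : ℕ) ≤ j ∧ j ≤ ν then f (I.extract μ j) * g (I.extract j ν) else 0
  have hfilter :
      (range (I.length + 1)).filter (fun j => (μ : ℕ) ≤ j ∧ j ≤ ν) = Ico (μ : ℕ) (ν + 1) := by
    ext j
    simp only [mem_filter, mem_range, mem_Ico]
    omega
  calc (sliceMatrix I f * sliceMatrix I g) μ ν = ∑ l : Fin (I.length + 1), F l := by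
        simp only [Matrix.mul_apply, sliceMatrix, Matrix.of_apply, ite_zero_mul_ite_zero, F]
    _ = ∑ j ∈ Ico (μ : ℕ) (ν + 1), f (I.extract μ j) * g (I.extract j ν) := by
        rw [Fin.sum_univ_eq_sum_range F, ← sum_filter, hfilter]
    _ = _ := by
        rw [sum_Ico_eq_sum_range, Nat.sub_add_comm hμν]

theorem sliceMatrix_conv (f g : List (Fin d) → Λ) :
    sliceMatrix I (conv f g) = sliceMatrix I f * sliceMatrix I g := by
  ext μ ν
  by_cases hμν : (μ : ℕ) ≤ ν
  · rw [sliceMatrix_mul_apply_of_le I f g hμν, sliceMatrix, Matrix.of_apply, if_pos hμν, conv,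
      List.length_extract_of_le I (Nat.lt_succ_iff.mp ν.isLt)]
    refine sum_congr rfl fun k hk => ?_
    rw [List.take_extract I (Nat.lt_succ_iff.mp (mem_range.mp hk)), List.drop_extract]
  · rw [Matrix.mul_apply, sliceMatrix, Matrix.of_apply, if_neg hμν]
    refine (sum_eq_zero fun l _ => ?_).symm
    simp only [sliceMatrix, Matrix.of_apply]
    by_cases hμl : (μ : ℕ) ≤ l
    · rw [if_neg (by omega : ¬ (l : ℕ) ≤ ν), mul_zero]
    · rw [if_neg hμl, zero_mul]

theorem sliceMatrix_convOne : sliceMatrix I (convOne Λ d) = 1 := by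
  ext μ ν
  have hν : (ν : ℕ) ≤ I.length := Nat.lt_succ_iff.mp ν.isLt
  simp only [sliceMatrix, convOne, Matrix.of_apply, Matrix.one_apply, ← List.length_eq_zero_iff,
    List.length_extract_of_le I hν, Fin.ext_iff]
  split_ifs <;> first | rfl | omega

end SliceMatrix

/-- Let `S` be the free group on `x_1,…,x_d`, `Λ` a commutative ring, and
`I = (i_1,…,i_k)` a multi-index of height `d`.  The map `ρ : S → U_{k+1}(Λ)` given by
`ρ(σ)_{μν} = ε_{(i_μ,…,i_{ν-1})}(σ)` for `μ < ν` (with 1's on the diagonal and 0's below)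
is a group homomorphism. -/
theorem stmt17 (Λ : Type*) [CommRing Λ] (d : ℕ) (I : List (Fin d))
    (ρ : FreeGroup (Fin d) → Matrix (Fin (I.length + 1)) (Fin (I.length + 1)) Λ)
    (hρ : ∀ (σ : FreeGroup (Fin d)) (μ ν : Fin (I.length + 1)),
      ρ σ μ ν =
        if (μ : ℕ) < (ν : ℕ) then eps Λ ((I.drop (μ : ℕ)).take ((ν : ℕ) - (μ : ℕ))) σ
        else if μ = ν then 1 else 0) :
    ρ 1 = 1 ∧ ∀ σ τ : FreeGroup (Fin d), ρ (σ * τ) = ρ σ * ρ τ := by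
  have hρ_eq : ∀ σ, ρ σ = sliceMatrix I (magnus Λ σ) := by
    intro σ
    ext μ ν
    rw [hρ, sliceMatrix, Matrix.of_apply]
    simp only [Fin.ext_iff]
    rcases lt_trichotomy (μ : ℕ) ν with hlt | heq | hgt
    · rw [if_pos hlt, if_pos hlt.le]
      rfl
    · rw [if_neg heq.not_lt, if_pos heq, if_pos heq.le, heq]
      simp [magnus_apply_nil]
    · rw [if_neg (by omega), if_neg (by omega), if_neg (by omega)]
  refine ⟨?_, fun σ τ => ?_⟩
  · rw [hρ_eq, magnus_one, sliceMatrix_convOne]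
  · rw [hρ_eq, hρ_eq, hρ_eq, magnus_mul, sliceMatrix_conv]
end

section
/- Let G be the cyclic group Z/2Z and χ ∈ H^1(G, F_2) the identity character. Then there is no group homomorphism ρ: G → Ū_5(F_2) (the quotient of U_5(F_2) by its center Z_5(F_2)) with ρ_{i,i+1} = χ for i = 1,…,4. Equivalently: any element B̄ of Ū_5(F_2) whose (i,i+1)-entries are all 1 satisfies B̄^2 ≠ 1. -/
/-- In `Ū_5(𝔽_2) = U_5(𝔽_2)/Z_5(𝔽_2)` (the quotient by the center, which
consists of matrices differing from the identity only at position `(1,5)`), any element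
whose `(i,i+1)`-entries are all `1` has square `≠ 1`.  Equivalently, for any
upper-triangular unipotent `B ∈ U_5(𝔽_2)` with all superdiagonal entries `1`, the matrix
`B²` differs from the identity at some position other than `(1,5)`; hence there is no
homomorphism `ρ : ℤ/2ℤ → Ū_5(𝔽_2)` with `ρ_{i,i+1} = χ` (`χ` the identity character). -/
theorem stmt18 (B : Matrix (Fin 5) (Fin 5) (ZMod 2))
    (hB : IsUnipotentUpper B)
    (hsup : ∀ i : Fin 4, B i.castSucc i.succ = 1) :
    ∃ i j : Fin 5, ¬ (i = 0 ∧ j = 4) ∧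
      (B ^ 2) i j ≠ (1 : Matrix (Fin 5) (Fin 5) (ZMod 2)) i j := by
  obtain ⟨hlow, hdiag⟩ := hB
  refine ⟨0, 2, by simp, ?_⟩
  have h00 := hdiag 0
  have h22 := hdiag 2
  have h01 := hsup 0
  have h12 := hsup 1
  have h32 := hlow 3 2 (by decide)
  have h42 := hlow 4 2 (by decide)
  have : (B ^ 2) 0 2 = ∑ k, B 0 k * B k 2 := by
    rw [pow_two, Matrix.mul_apply]
  rw [this, Fin.sum_univ_five]
  have hc : (Fin.castSucc 0 : Fin 5) = 0 ∧ (Fin.succ (0:Fin 4) : Fin 5) = 1 ∧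
      (Fin.castSucc 1 : Fin 5) = 1 ∧ (Fin.succ (1:Fin 4) : Fin 5) = 2 := by decide
  rw [hc.1, hc.2.1] at h01; rw [hc.2.2.1, hc.2.2.2] at h12
  rw [h00, h01, h12, h22, h32, h42, Matrix.one_apply]
  ring_nf
  rw [show (2:ZMod 2) = 0 by decide, mul_zero, add_zero]
  decide
end
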